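/- Let R be a *-ring and a ∈ R. Then a is a *-DMP element (i.e. aⁿ is an EP element for some positive integer n) if and only if there exist a positive integer n and a unique x ∈ R such that axaⁿ = aⁿ, ax² = x, and (ax)* = xa. -/
import Mathlib

section aux
set_option linter.unusedSectionVars false
variable {R : Type*} [Ring R] [StarRing R]

lemma aux_comm (a x : R) (hx2 : a * x ^ 2 = x) (hx3 : star (a * x) = x * a) :
    a * x = x * a := by
  have h1 : x * a = (a * x) * (x * a) := by
    conv_lhs => rw [← hx2]
    noncomm_ring
  have he : star (a * x) = (a * x) * star (a * x) := by rw [hx3]; exact h1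
  have hsa : a * x = star (a * x) := by
    calc a * x = star (star (a * x)) := (star_star _).symm
    _ = star ((a * x) * star (a * x)) := by rw [← he]
    _ = star (star (a * x)) * star (a * x) := by rw [star_mul]
    _ = (a * x) * star (a * x) := by rw [star_star]
    _ = star (a * x) := he.symm
  rw [hsa, hx3]

lemma aux_pow (a x : R) (hx2 : a * x ^ 2 = x) : ∀ k : ℕ, a ^ k * x ^ (k + 1) = x
  | 0 => by simp
  | (k+1) => by
    have h : a * x ^ (k + 2) = x ^ (k + 1) := by
      calc a * x ^ (k + 2) = (a * x ^ 2) * x ^ k := by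
            rw [mul_assoc, ← pow_add, show 2 + k = k + 2 from by omega]
      _ = x * x ^ k := by rw [hx2]
      _ = x ^ (k + 1) := by rw [← pow_succ']
    calc a ^ (k+1) * x ^ (k + 2) = a ^ k * (a * x ^ (k + 2)) := by
          rw [pow_succ, mul_assoc]
    _ = a ^ k * x ^ (k + 1) := by rw [h]
    _ = x := aux_pow a x hx2 k

lemma aux_ginv_comm (c y a : R) (h1 : c * y * c = c) (h2 : y * c * y = y)
    (h3 : c * y = y * c) (hac : a * c = c * a) : a * y = y * a := by
  have hcyy : c * y * y = y := by rw [h3]; exact h2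
  have hyyc : y * y * c = y := by
    calc y * y * c = y * (c * y) := by rw [mul_assoc, h3]
    _ = y := by rw [← mul_assoc]; exact h2
  have hycc : y * c * c = c := by rw [← h3]; exact h1
  have hccy : c * c * y = c := by
    calc c * c * y = c * (y * c) := by rw [mul_assoc, ← h3]
    _ = c := by rw [← mul_assoc]; exact h1
  have hccyy : c * c * (y * y) = c * y := by
    calc c * c * (y * y) = (c * c * y) * y := by noncomm_ring
    _ = c * y := by rw [hccy]
  have hyycc : y * y * (c * c) = y * c := by
    calc y * y * (c * c) = (y * y * c) * c := by noncomm_ring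
    _ = y * c := by rw [hyyc]
  have hB0 : y * a * (c * c) = c * a := by
    calc y * a * (c * c) = y * (a * c) * c := by noncomm_ring
    _ = y * (c * a) * c := by rw [hac]
    _ = (y * c) * (a * c) := by noncomm_ring
    _ = (y * c) * (c * a) := by rw [hac]
    _ = (y * c * c) * a := by noncomm_ring
    _ = c * a := by rw [hycc]
  have hD0 : c * c * (a * y) = a * c := by
    calc c * c * (a * y) = c * (c * a) * y := by noncomm_ring
    _ = c * (a * c) * y := by rw [hac]
    _ = (c * a) * (c * y) := by noncomm_ring
    _ = (a * c) * (c * y) := by rw [hac]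
    _ = a * (c * c * y) := by noncomm_ring
    _ = a * c := by rw [hccy]
  calc a * y = a * (c * y * y) := by rw [hcyy]
  _ = (a * c) * (y * y) := by noncomm_ring
  _ = (c * a) * (y * y) := by rw [hac]
  _ = (y * a * (c * c)) * (y * y) := by rw [hB0]
  _ = (y * a) * (c * c * (y * y)) := by noncomm_ring
  _ = (y * a) * (c * y) := by rw [hccyy]
  _ = y * (a * c) * y := by noncomm_ring
  _ = y * (c * a) * y := by rw [hac]
  _ = (y * c) * (a * y) := by noncomm_ring
  _ = (y * y * (c * c)) * (a * y) := by rw [hyycc]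
  _ = (y * y) * (c * c * (a * y)) := by noncomm_ring
  _ = (y * y) * (a * c) := by rw [hD0]
  _ = (y * y) * (c * a) := by rw [hac]
  _ = (y * y * c) * a := by noncomm_ring
  _ = y * a := by rw [hyyc]

end aux

/-- An element `c` of a *-ring is EP if there exists `y` with
`c*y*c = c`, `y*c*y = y`, `c*y = y*c`, and `(c*y)* = c*y`. -/
def IsEP {R : Type*} [Ring R] [StarRing R] (c : R) : Prop :=
  ∃ y : R, c * y * c = c ∧ y * c * y = y ∧ c * y = y * c ∧ star (c * y) = c * y

/-- Theorem 4.2: `a` is a *-DMP element (some positive power of `a` is EP)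
iff there exist a positive integer `n` and a unique `x` such that
`a*x*aⁿ = aⁿ`, `a*x² = x` and `(a*x)* = x*a`. -/
theorem stmt_19 {R : Type*} [Ring R] [StarRing R] (a : R) :
    (∃ n : ℕ, 0 < n ∧ IsEP (a ^ n)) ↔
      ∃ n : ℕ, 0 < n ∧
        ∃! x : R, a * x * a ^ n = a ^ n ∧ a * x ^ 2 = x ∧ star (a * x) = x * a := by
  constructor
  · rintro ⟨n, hn, y, h1, h2, h3, h4⟩
    obtain ⟨m, rfl⟩ : ∃ m, n = m + 1 := ⟨n - 1, (Nat.succ_pred_eq_of_pos hn).symm⟩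
    have hac : a * a ^ (m+1) = a ^ (m+1) * a := (Commute.refl a).pow_right (m+1)
    have hay : a * y = y * a := aux_ginv_comm _ y a h1 h2 h3 hac
    have hy : Commute a y := hay
    have hym : y * a ^ m = a ^ m * y := (hy.pow_left m).symm
    have hcyy : a ^ (m+1) * y * y = y := by rw [h3]; exact h2
    have hyyc : y * y * a ^ (m+1) = y := by
      calc y * y * a ^ (m+1) = y * (a ^ (m+1) * y) := by rw [mul_assoc, h3]
      _ = y := by rw [← mul_assoc]; exact h2
    have cyy : Commute (a ^ (m+1)) (y * y) := (hy.pow_left (m+1)).mul_right (hy.pow_left (m+1))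
    have hy2 : y = a ^ (m+1) * (y * y) := by rw [cyy.eq, hyyc]
    have hax : a * (a ^ m * y) = a ^ (m+1) * y := by
      rw [← mul_assoc, ← pow_succ']
    have cond1 : a * (a ^ m * y) * a ^ (m+1) = a ^ (m+1) := by rw [hax]; exact h1
    have cond2 : a * (a ^ m * y) ^ 2 = a ^ m * y := by
      calc a * (a ^ m * y) ^ 2 = (a * (a ^ m * y)) * (a ^ m * y) := by
            rw [pow_two, ← mul_assoc]
      _ = (a ^ (m+1) * y) * (a ^ m * y) := by rw [hax]
      _ = a ^ (m+1) * (y * a ^ m) * y := by noncomm_ring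
      _ = a ^ (m+1) * (a ^ m * y) * y := by rw [hym]
      _ = (a ^ (m+1) * a ^ m) * (y * y) := by noncomm_ring
      _ = (a ^ m * a ^ (m+1)) * (y * y) := by rw [pow_mul_comm]
      _ = a ^ m * (a ^ (m+1) * y * y) := by noncomm_ring
      _ = a ^ m * y := by rw [hcyy]
    have cond3 : star (a * (a ^ m * y)) = (a ^ m * y) * a := by
      rw [hax]
      calc star (a ^ (m+1) * y) = a ^ (m+1) * y := h4
      _ = a ^ m * (a * y) := by rw [← mul_assoc, ← pow_succ]
      _ = a ^ m * (y * a) := by rw [hay]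
      _ = (a ^ m * y) * a := by rw [mul_assoc]
    refine ⟨m + 1, hn, a ^ m * y, ⟨cond1, cond2, cond3⟩, ?_⟩
    rintro x' ⟨k1, k2, k3⟩
    have comm' : a * x' = x' * a := aux_comm a x' k2 k3
    have sa' : star (a * x') = a * x' := by rw [k3, ← comm']
    have sa : star (a * (a ^ m * y)) = a * (a ^ m * y) := by
      rw [hax]; exact h4
    have hx'pow : a ^ (m+1) * x' ^ (m + 2) = x' := aux_pow a x' k2 (m+1)
    have hex' : a ^ (m+1) * y * x' = x' := by
      calc a ^ (m+1) * y * x' = a ^ (m+1) * y * (a ^ (m+1) * x' ^ (m+2)) := by rw [hx'pow]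
      _ = (a ^ (m+1) * y * a ^ (m+1)) * x' ^ (m+2) := by noncomm_ring
      _ = a ^ (m+1) * x' ^ (m+2) := by rw [h1]
      _ = x' := hx'pow
    have ham_y : a ^ m * y = a ^ (m+1) * (a ^ m * (y * y)) := by
      conv_lhs => rw [hy2]
      rw [← mul_assoc, pow_mul_comm a m (m+1)]
      noncomm_ring
    have he'x : a * x' * (a ^ m * y) = a ^ m * y := by
      calc a * x' * (a ^ m * y) = a * x' * (a ^ (m+1) * (a ^ m * (y * y))) := by rw [ham_y]
      _ = (a * x' * a ^ (m+1)) * (a ^ m * (y * y)) := by noncomm_ring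
      _ = a ^ (m+1) * (a ^ m * (y * y)) := by rw [k1]
      _ = a ^ m * y := by rw [← ham_y]
    have hxe' : (a ^ m * y) * (a * x') = x' := by
      calc (a ^ m * y) * (a * x') = (a ^ m * (y * a)) * x' := by noncomm_ring
      _ = (a ^ m * (a * y)) * x' := by rw [hay]
      _ = a ^ (m+1) * y * x' := by rw [← mul_assoc, ← pow_succ]
      _ = x' := hex'
    have hx'e : x' * (a * (a ^ m * y)) = a ^ m * y := by
      calc x' * (a * (a ^ m * y)) = (x' * a) * (a ^ m * y) := by noncomm_ring
      _ = a * x' * (a ^ m * y) := by rw [← comm']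
      _ = a ^ m * y := he'x
    have hxselfe : (a ^ m * y) * (a * (a ^ m * y)) = a ^ m * y := by
      rw [hax]
      calc (a ^ m * y) * (a ^ (m+1) * y) = a ^ m * (y * a ^ (m+1) * y) := by noncomm_ring
      _ = a ^ m * y := by rw [h2]
    have hee' : (a * (a ^ m * y)) * (a * x') = a * x' := by
      calc (a * (a ^ m * y)) * (a * x') = a * ((a ^ m * y) * (a * x')) := by noncomm_ring
      _ = a * x' := by rw [hxe']
    have he'e : (a * x') * (a * (a ^ m * y)) = a * (a ^ m * y) := by
      calc (a * x') * (a * (a ^ m * y)) = a * (x' * (a * (a ^ m * y))) := by noncomm_ring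
      _ = a * (a ^ m * y) := by rw [hx'e]
    have heq : a * x' = a * (a ^ m * y) := by
      calc a * x' = star (a * x') := sa'.symm
      _ = star ((a * (a ^ m * y)) * (a * x')) := by rw [hee']
      _ = star (a * x') * star (a * (a ^ m * y)) := star_mul _ _
      _ = (a * x') * (a * (a ^ m * y)) := by rw [sa', sa]
      _ = a * (a ^ m * y) := he'e
    calc x' = (a ^ m * y) * (a * x') := hxe'.symm
    _ = (a ^ m * y) * (a * (a ^ m * y)) := by rw [heq]
    _ = a ^ m * y := hxselfe
  · rintro ⟨n, hn, x, ⟨k1, k2, k3⟩, -⟩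
    obtain ⟨m, rfl⟩ : ∃ m, n = m + 1 := ⟨n - 1, (Nat.succ_pred_eq_of_pos hn).symm⟩
    have comm : a * x = x * a := aux_comm a x k2 k3
    have hx : Commute a x := comm
    have idem : IsIdempotentElem (a * x) := by
      show (a * x) * (a * x) = a * x
      calc (a * x) * (a * x) = a * ((x * a) * x) := by noncomm_ring
      _ = a * ((a * x) * x) := by rw [comm]
      _ = a * (a * x ^ 2) := by noncomm_ring
      _ = a * x := by rw [k2]
    have epow : (a * x) ^ (m + 1) = a * x := idem.pow_succ_eq m
    have hmp : a ^ (m+1) * x ^ (m+1) = a * x := by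
      rw [← hx.mul_pow, epow]
    have hmp' : x ^ (m+1) * a ^ (m+1) = a * x := by
      rw [← hx.symm.mul_pow, ← comm, epow]
    have hex : (a * x) * x ^ (m+1) = x ^ (m+1) := by
      rw [mul_assoc, ← pow_succ', show m+1+1 = 2+m from by omega, pow_add,
        ← mul_assoc, k2, ← pow_succ']
    refine ⟨m + 1, hn, x ^ (m+1), ?_, ?_, ?_, ?_⟩
    · rw [hmp]; exact k1
    · rw [hmp']; exact hex
    · rw [hmp, hmp']
    · rw [hmp, k3, ← comm]
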